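/- Let Φ be the standard normal cumulative distribution function, D > 0, S > 0, γ ≥ 1, ε > 0, and let C = {(x,y) : x > D, y > S, x − D ≤ 3√y}. If (x*, y*) ∈ C and (x'', y'') ∈ C satisfy |log x* − log x''| ≤ γ log(1+ε) and |log y* − log y''| ≤ γ log(1+ε), then Φ((D−x*)/√y*) ≤ (1+ε)^{6.568(3 + D/√S)γ} · Φ((D−x'')/√y''). -/

import Mathlib

/-!
Write `I z = ∫_{-∞}^z e^{-t²/2} dt`, so that `Φ` is a constant multiple of `I`. On `C` the argument
`z = (D - x)/√y` lies in `[-3, 0]`, and there the Mills-ratio bound `|z|/(z²+1) · e^{-z²/2} ≤ I z`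
gives `I' ≤ 3.35 I`, so `log I` is `3.35`-Lipschitz on `[-3, 0]` by Grönwall. Changing `x` and `y` by
factors at most `e^k`, `k = γ log(1+ε)`, moves `z` by at most `(3 + D/√S)(e^k - 1) + 3k/2`, and by at
most `3` since `z` stays in `[-3, 0]`; for `3 + D/√S ≥ 3` these two bounds give
`3.35 (z* - z'') ≤ 6.568 (3 + D/√S) k`.
-/

namespace Stmt16

noncomputable def Phi (x : ℝ) : ℝ :=
  (2 * Real.pi) ^ (-(1 / 2) : ℝ) * ∫ t in Set.Iic x, Real.exp (-t ^ 2 / 2)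

open MeasureTheory Real Set Filter Topology

noncomputable def gaussKernel (t : ℝ) : ℝ := exp (-t ^ 2 / 2)

noncomputable def gaussIntegral (z : ℝ) : ℝ := ∫ t in Iic z, gaussKernel t

lemma Phi_eq (x : ℝ) : Phi x = (2 * π) ^ (-(1 / 2) : ℝ) * gaussIntegral x := rfl

lemma gaussKernel_pos (t : ℝ) : 0 < gaussKernel t := exp_pos _

lemma gaussKernel_le_one (t : ℝ) : gaussKernel t ≤ 1 :=
  exp_le_one_iff.mpr (by nlinarith [sq_nonneg t])

lemma continuous_gaussKernel : Continuous gaussKernel := by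
  unfold gaussKernel; fun_prop

lemma integrable_gaussKernel : Integrable gaussKernel := by
  refine (integrable_exp_neg_mul_sq (b := 1 / 2) (by norm_num)).congr (ae_of_all _ fun t => ?_)
  simp only [gaussKernel]; ring_nf

lemma hasDerivAt_gaussKernel (t : ℝ) : HasDerivAt gaussKernel (-t * gaussKernel t) t := by
  have h : HasDerivAt (fun x : ℝ => -x ^ 2 / 2) (-t) t :=
    ((hasDerivAt_pow 2 t).neg.div_const 2).congr_deriv (by push_cast; ring)
  exact h.exp.congr_deriv (by rw [gaussKernel]; ring)

lemma tendsto_gaussKernel_atBot : Tendsto gaussKernel atBot (𝓝 0) := by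
  have hsq : Tendsto (fun t : ℝ => t ^ 2) atBot atTop :=
    (tendsto_pow_atTop two_ne_zero).comp tendsto_neg_atBot_atTop |>.congr fun t => by simp
  exact tendsto_exp_atBot.comp ((tendsto_neg_atTop_atBot.comp hsq).atBot_div_const two_pos)

lemma gaussIntegral_nonneg (z : ℝ) : 0 ≤ gaussIntegral z :=
  setIntegral_nonneg measurableSet_Iic fun t _ => (gaussKernel_pos t).le

lemma gaussIntegral_mono : Monotone gaussIntegral := fun _ _ h =>
  setIntegral_mono_set integrable_gaussKernel.integrableOn
    (ae_of_all _ fun t => (gaussKernel_pos t).le) (Iic_subset_Iic.mpr h).eventuallyLE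

lemma hasDerivAt_gaussIntegral (z : ℝ) : HasDerivAt gaussIntegral (gaussKernel z) z := by
  have h : gaussIntegral = fun u => gaussIntegral 0 + ∫ t in (0 : ℝ)..u, gaussKernel t := by
    funext u
    rw [intervalIntegral.integral_Iic_sub_Iic integrable_gaussKernel.integrableOn
      integrable_gaussKernel.integrableOn |>.symm, gaussIntegral, gaussIntegral]
    ring
  rw [h]
  exact (intervalIntegral.integral_hasDerivAt_right integrable_gaussKernel.intervalIntegrable
    (continuous_gaussKernel.stronglyMeasurableAtFilter _ _)
    continuous_gaussKernel.continuousAt).const_add _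

noncomputable def millsMinorant (t : ℝ) : ℝ := -t / (t ^ 2 + 1) * gaussKernel t

lemma hasDerivAt_millsMinorant (t : ℝ) :
    HasDerivAt millsMinorant (gaussKernel t - 2 * gaussKernel t / (t ^ 2 + 1) ^ 2) t := by
  have hden : t ^ 2 + 1 ≠ 0 := by positivity
  have hq : HasDerivAt (fun x : ℝ => -x / (x ^ 2 + 1))
      ((-1 * (t ^ 2 + 1) - -t * (2 * t)) / (t ^ 2 + 1) ^ 2) t :=
    ((hasDerivAt_id t).neg.div ((hasDerivAt_pow 2 t).add_const 1) hden).congr_deriv (by simp)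
  exact (hq.mul (hasDerivAt_gaussKernel t)).congr_deriv (by field_simp; ring)

lemma tendsto_millsMinorant_atBot : Tendsto millsMinorant atBot (𝓝 0) := by
  refine squeeze_zero_norm (fun t => ?_) tendsto_gaussKernel_atBot
  have hden : 0 < t ^ 2 + 1 := by positivity
  have hfrac : |-t / (t ^ 2 + 1)| ≤ 1 := by
    rw [abs_div, abs_neg, abs_of_pos hden, div_le_one hden]
    nlinarith [sq_abs t, sq_nonneg (|t| - 1)]
  rw [millsMinorant, norm_mul, Real.norm_eq_abs, Real.norm_eq_abs, abs_of_pos (gaussKernel_pos t)]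
  exact mul_le_of_le_one_left (gaussKernel_pos t).le hfrac

lemma integrable_gaussKernel_div_sq : Integrable fun t => 2 * gaussKernel t / (t ^ 2 + 1) ^ 2 := by
  have hcont : Continuous fun t => 2 * gaussKernel t / (t ^ 2 + 1) ^ 2 :=
    (continuous_gaussKernel.const_mul 2).div (by fun_prop) fun t => by positivity
  refine (integrable_gaussKernel.const_mul 2).mono hcont.aestronglyMeasurable
    (ae_of_all _ fun t => ?_)
  have hden : 1 ≤ (t ^ 2 + 1) ^ 2 := one_le_pow₀ (by nlinarith [sq_nonneg t])
  have hpos : 0 ≤ 2 * gaussKernel t := by linarith [gaussKernel_pos t]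
  rw [Real.norm_eq_abs, Real.norm_eq_abs, abs_of_nonneg (div_nonneg hpos (by positivity)),
    abs_of_nonneg hpos]
  exact div_le_self hpos hden

lemma millsMinorant_le_gaussIntegral (z : ℝ) : millsMinorant z ≤ gaussIntegral z := by
  have hint : Integrable fun t => gaussKernel t - 2 * gaussKernel t / (t ^ 2 + 1) ^ 2 :=
    integrable_gaussKernel.sub integrable_gaussKernel_div_sq
  have hftc : ∫ t in Iic z, (gaussKernel t - 2 * gaussKernel t / (t ^ 2 + 1) ^ 2) =
      millsMinorant z := by
    rw [integral_Iic_of_hasDerivAt_of_tendsto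
      (hasDerivAt_millsMinorant z).continuousAt.continuousWithinAt
      (fun t _ => hasDerivAt_millsMinorant t) hint.integrableOn tendsto_millsMinorant_atBot,
      sub_zero]
  have hdiff : gaussIntegral z - millsMinorant z =
      ∫ t in Iic z, 2 * gaussKernel t / (t ^ 2 + 1) ^ 2 := by
    rw [← hftc, gaussIntegral, ← integral_sub integrable_gaussKernel.integrableOn hint.integrableOn]
    simp only [sub_sub_cancel]
  have : 0 ≤ ∫ t in Iic z, 2 * gaussKernel t / (t ^ 2 + 1) ^ 2 :=
    setIntegral_nonneg measurableSet_Iic fun t _ => by have := gaussKernel_pos t; positivity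
  linarith

/-- Left of `-2/5` this is the Mills-ratio bound; right of it, `gaussKernel ≤ 1` while
`gaussIntegral` is at least its value at `-2/5`, itself bounded below by the Mills ratio. -/
lemma gaussKernel_le_mul_gaussIntegral {z : ℝ} (hz : z ∈ Icc (-3 : ℝ) 0) :
    gaussKernel z ≤ 67 / 20 * gaussIntegral z := by
  obtain ⟨h3, h0⟩ := hz
  rcases le_total z (-2 / 5) with hz | hz
  · have hden : 0 < z ^ 2 + 1 := by positivity
    have hratio : 1 ≤ 67 / 20 * (-z / (z ^ 2 + 1)) := by
      rw [mul_div_assoc', le_div_iff₀ hden]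
      nlinarith
    have := millsMinorant_le_gaussIntegral z
    rw [millsMinorant] at this
    nlinarith [gaussKernel_pos z]
  · have hexp : 23 / 25 ≤ gaussKernel (-2 / 5) := by
      rw [gaussKernel, show -(-2 / 5 : ℝ) ^ 2 / 2 = -2 / 25 by norm_num]
      linarith [add_one_le_exp (-2 / 25)]
    have hmills : 10 / 29 * gaussKernel (-2 / 5) ≤ gaussIntegral (-2 / 5) := by
      convert millsMinorant_le_gaussIntegral (-2 / 5) using 1; norm_num [millsMinorant]
    linarith [gaussKernel_le_one z, gaussIntegral_mono hz]

lemma gaussIntegral_le_exp_mul {a b t : ℝ} (ha : a ∈ Icc (-3 : ℝ) 0) (hb : b ∈ Icc (-3 : ℝ) 0)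
    (hab : 67 / 20 * (a - b) ≤ t) (ht : 0 ≤ t) :
    gaussIntegral a ≤ exp t * gaussIntegral b := by
  rcases le_total a b with hle | hba
  · exact (gaussIntegral_mono hle).trans (le_mul_of_one_le_left (gaussIntegral_nonneg b)
      (one_le_exp ht))
  have hgronwall := norm_le_gronwallBound_of_norm_deriv_right_le (f := gaussIntegral)
    (f' := gaussKernel) (δ := gaussIntegral b) (K := 67 / 20) (ε := 0) (a := b) (b := a)
    (fun z _ => (hasDerivAt_gaussIntegral z).continuousAt.continuousWithinAt)
    (fun z _ => (hasDerivAt_gaussIntegral z).hasDerivWithinAt)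
    (by rw [Real.norm_eq_abs, abs_of_nonneg (gaussIntegral_nonneg b)])
    (fun z hz => by
      rw [Real.norm_eq_abs, Real.norm_eq_abs, abs_of_pos (gaussKernel_pos z),
        abs_of_nonneg (gaussIntegral_nonneg z), add_zero]
      exact gaussKernel_le_mul_gaussIntegral ⟨hb.1.trans hz.1, hz.2.le.trans ha.2⟩)
    a ⟨hba, le_rfl⟩
  rw [gronwallBound_ε0, Real.norm_eq_abs, abs_of_nonneg (gaussIntegral_nonneg a)] at hgronwall
  calc gaussIntegral a ≤ gaussIntegral b * exp (67 / 20 * (a - b)) := hgronwall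
    _ ≤ exp t * gaussIntegral b := by
      rw [mul_comm]
      exact mul_le_mul_of_nonneg_right (exp_le_exp.mpr hab) (gaussIntegral_nonneg b)

lemma le_mul_exp_of_abs_log_sub_le {a b k : ℝ} (ha : 0 < a) (hb : 0 < b)
    (h : |log a - log b| ≤ k) : b ≤ a * exp k := by
  have hlog : log b ≤ log a + k := by linarith [neg_abs_le (log a - log b)]
  simpa only [exp_add, exp_log ha] using (log_le_iff_le_exp hb).mp hlog

lemma div_sqrt_mem_Icc {D x y : ℝ} (hy : 0 < y) (hDx : D ≤ x) (hC : x - D ≤ 3 * √y) :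
    (D - x) / √y ∈ Icc (-3 : ℝ) 0 := by
  have hsqrt : 0 < √y := sqrt_pos.mpr hy
  exact ⟨by rw [le_div_iff₀ hsqrt]; linarith, div_nonpos_of_nonpos_of_nonneg (by linarith) hsqrt.le⟩

lemma div_sqrt_sub_div_sqrt_le {D S k xs ys x y : ℝ} (hD : 0 ≤ D) (hS : 0 < S) (hk : 0 ≤ k)
    (hys : S < ys) (hCs : xs - D ≤ 3 * √ys) (hy : 0 < y) (hDx : D ≤ x) (hC : x - D ≤ 3 * √y)
    (hxk : x ≤ xs * exp k) (hyk : ys ≤ y * exp k) :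
    (D - xs) / √ys - (D - x) / √y ≤ (3 + D / √S) * (exp k - 1) + 3 / 2 * k := by
  have hA : 0 < √ys := sqrt_pos.mpr (hS.trans hys)
  have hB : 0 < √y := sqrt_pos.mpr hy
  have hsplit : (D - xs) / √ys - (D - x) / √y =
      (x - xs) / √ys + (x - D) / √y * (1 - √y / √ys) := by
    field_simp; ring
  have hxs : xs / √ys ≤ 3 + D / √S := by
    have hDA : D / √ys ≤ D / √S := div_le_div_of_nonneg_left hD (sqrt_pos.mpr hS)
      (sqrt_le_sqrt hys.le)
    have h3 : (xs - D) / √ys ≤ 3 := (div_le_iff₀ hA).mpr hCs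
    calc xs / √ys = (xs - D) / √ys + D / √ys := by ring
      _ ≤ 3 + D / √S := add_le_add h3 hDA
  have hfirst : (x - xs) / √ys ≤ (3 + D / √S) * (exp k - 1) := by
    calc (x - xs) / √ys ≤ xs * (exp k - 1) / √ys := by gcongr; linarith
      _ = xs / √ys * (exp k - 1) := by ring
      _ ≤ (3 + D / √S) * (exp k - 1) := by gcongr; linarith [one_le_exp hk]
  have hratio : 1 - √y / √ys ≤ k / 2 := by
    have hA' : √ys ≤ √y * exp (k / 2) := by
      rw [exp_half, ← sqrt_mul hy.le]; exact sqrt_le_sqrt hyk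
    have : exp (-(k / 2)) ≤ √y / √ys := by
      rw [le_div_iff₀ hA, exp_neg, inv_mul_le_iff₀ (exp_pos _)]; linarith
    linarith [add_one_le_exp (-(k / 2))]
  have hz : (x - D) / √y ∈ Icc (0 : ℝ) 3 :=
    ⟨div_nonneg (by linarith) hB.le, (div_le_iff₀ hB).mpr hC⟩
  rw [hsplit]
  nlinarith [hz.1, hz.2]

lemma mul_sub_le_of_le_exp_sub_one {c k d : ℝ} (hc : 3 ≤ c) (hk : 0 ≤ k)
    (hd : d ≤ c * (exp k - 1) + 3 / 2 * k) (hd3 : d ≤ 3) : 67 / 20 * d ≤ 6.568 * c * k := by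
  rcases le_total k (3 / 5) with hsmall | hlarge
  -- for small `k` the cubic Taylor bound gives `e^k - 1 ≤ 1.38 k`; for large `k`, `d ≤ 3` suffices
  · have hexp := exp_bound' hk (by linarith) (n := 3) (by norm_num)
    norm_num [Finset.sum_range_succ, Nat.factorial] at hexp
    have hk2 : k ^ 2 / 2 + k ^ 3 * 4 / 18 ≤ 19 / 50 * k := by nlinarith
    nlinarith
  · nlinarith

theorem stmt_16_general (D S γ ε : ℝ) (hD : 0 < D) (hS : 0 < S) (hε : 0 < ε)
    (xs ys x'' y'' : ℝ)
    (hxs : D < xs) (hys : S < ys) (hCs : xs - D ≤ 3 * Real.sqrt ys)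
    (hx'' : D < x'') (hy'' : S < y'') (hC'' : x'' - D ≤ 3 * Real.sqrt y'')
    (hx : |Real.log xs - Real.log x''| ≤ γ * Real.log (1 + ε))
    (hy : |Real.log ys - Real.log y''| ≤ γ * Real.log (1 + ε)) :
    Phi ((D - xs) / Real.sqrt ys) ≤
      (1 + ε) ^ (6.568 * (3 + D / Real.sqrt S) * γ) *
        Phi ((D - x'') / Real.sqrt y'') := by
  set k := γ * log (1 + ε) with hk_def
  set c := 3 + D / √S
  have hk : 0 ≤ k := (abs_nonneg _).trans hx
  have hc : 3 ≤ c := le_add_of_nonneg_right (by positivity)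
  have hxk : x'' ≤ xs * exp k := le_mul_exp_of_abs_log_sub_le (hD.trans hxs) (hD.trans hx'') hx
  have hyk : ys ≤ y'' * exp k :=
    le_mul_exp_of_abs_log_sub_le (hS.trans hy'') (hS.trans hys) (by rwa [abs_sub_comm] at hy)
  have hzs := div_sqrt_mem_Icc (hS.trans hys) hxs.le hCs
  have hz'' := div_sqrt_mem_Icc (hS.trans hy'') hx''.le hC''
  have hexponent := mul_sub_le_of_le_exp_sub_one hc hk
    (div_sqrt_sub_div_sqrt_le hD.le hS hk hys hCs (hS.trans hy'') hx''.le hC'' hxk hyk)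
    (by linarith [hzs.2, hz''.1])
  have hpow : (1 + ε) ^ (6.568 * c * γ) = exp (6.568 * c * k) := by
    rw [rpow_def_of_pos (by linarith), hk_def]; ring_nf
  rw [Phi_eq, Phi_eq, hpow, mul_left_comm]
  exact mul_le_mul_of_nonneg_left (gaussIntegral_le_exp_mul hzs hz'' hexponent (by positivity))
    (by positivity)

/-- First case in the proof of Theorem 3: on the region
`C = {(x,y) : x > D, y > S, x − D ≤ 3√y}`, coordinatewise multiplicative error
`(1+ε)^γ` translates into the objective approximation factor
`(1+ε)^{6.568(3 + D/√S)γ}` for the deadline objective `Φ((D−x)/√y)`. -/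
theorem stmt_16 (D S γ ε : ℝ) (hD : 0 < D) (hS : 0 < S) (hγ : 1 ≤ γ) (hε : 0 < ε)
    (xs ys x'' y'' : ℝ)
    (hxs : D < xs) (hys : S < ys) (hCs : xs - D ≤ 3 * Real.sqrt ys)
    (hx'' : D < x'') (hy'' : S < y'') (hC'' : x'' - D ≤ 3 * Real.sqrt y'')
    (hx : |Real.log xs - Real.log x''| ≤ γ * Real.log (1 + ε))
    (hy : |Real.log ys - Real.log y''| ≤ γ * Real.log (1 + ε)) :
    Phi ((D - xs) / Real.sqrt ys) ≤
      (1 + ε) ^ (6.568 * (3 + D / Real.sqrt S) * γ) *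
        Phi ((D - x'') / Real.sqrt y'') :=
  stmt_16_general D S γ ε hD hS hε xs ys x'' y'' hxs hys hCs hx'' hy'' hC'' hx hy

end Stmt16
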